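/- arXiv:1207.3269 — 3 statements merged into one kernel-verified Lean document; each statement's English description precedes it below -/
import Mathlib

section
/- Let X be a discrete random variable with values in a finite set 𝒳, and let Y ∈ 𝒴 be the output of an ε-locally-differentially-private mechanism applied to X (so that for all y and all x, x', P[Y=y|X=x] ≤ e^ε P[Y=y|X=x']). Then the mutual information satisfies I(X;Y) ≤ ε · log₂ e, i.e., I(X;Y) ≤ ε/ln 2 bits (equivalently, I(X;Y) ≤ ε nats). -/
/-! The privacy condition bounds every likelihood `Q x y` by `e^ε` times each `Q x' y`, hence by
`e^ε` times their `p`-average, the output marginal `P[Y = y]`. So each information density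
`log (P[Y = y | X = x] / P[Y = y])` is at most `ε` nats, and so is its average `I(X;Y)`. -/

open Finset

theorem le_mul_sum_of_forall_le {ι : Type*} [Fintype ι] {w f : ι → ℝ} (hw : ∀ i, 0 ≤ w i)
    (hw1 : ∑ i, w i = 1) {a c : ℝ} (h : ∀ i, a ≤ c * f i) : a ≤ c * ∑ i, w i * f i :=
  calc a = ∑ i, w i * a := by rw [← sum_mul, hw1, one_mul]
    _ ≤ ∑ i, w i * (c * f i) := sum_le_sum fun i _ => mul_le_mul_of_nonneg_left (h i) (hw i)
    _ = c * ∑ i, w i * f i := by rw [mul_sum]; exact sum_congr rfl fun i _ => by ring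

theorem mul_logb_div_le_of_le_exp_mul {b ε u v : ℝ} (hb : 1 < b) (hu : 0 ≤ u)
    (h : u ≤ Real.exp ε * v) : u * Real.logb b (u / v) ≤ u * (ε / Real.log b) := by
  rcases hu.eq_or_lt with rfl | hu
  · simp
  have hv : 0 < v := pos_of_mul_pos_right (hu.trans_le h) (Real.exp_pos ε).le
  have hratio : u / v ≤ Real.exp ε := (div_le_iff₀ hv).2 h
  have hlog : Real.log (u / v) ≤ ε := (Real.log_le_iff_le_exp (div_pos hu hv)).2 hratio
  exact mul_le_mul_of_nonneg_left
    (div_le_div_of_nonneg_right hlog (Real.log_pos hb).le) hu.le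

theorem stmt_2_general {X Y : Type*} [Fintype X] [Fintype Y]
    (ε : ℝ)
    (p : X → ℝ) (hp : ∀ x, 0 ≤ p x) (hp1 : ∑ x, p x = 1)
    (Q : X → Y → ℝ) (hQ : ∀ x y, 0 ≤ Q x y) (hQ1 : ∀ x, ∑ y, Q x y = 1)
    (hdp : ∀ (y : Y) (x x' : X), Q x y ≤ Real.exp ε * Q x' y) :
    ∑ x, ∑ y, p x * Q x y *
        Real.logb 2 (p x * Q x y / (p x * ∑ x', p x' * Q x' y)) ≤
      ε / Real.log 2 := by
  have hmarginal : ∀ x y, Q x y ≤ Real.exp ε * ∑ x', p x' * Q x' y := fun x y =>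
    le_mul_sum_of_forall_le hp hp1 (hdp y x)
  calc ∑ x, ∑ y, p x * Q x y *
        Real.logb 2 (p x * Q x y / (p x * ∑ x', p x' * Q x' y))
      ≤ ∑ x, ∑ y, p x * Q x y * (ε / Real.log 2) := by
        refine sum_le_sum fun x _ => sum_le_sum fun y _ =>
          mul_logb_div_le_of_le_exp_mul one_lt_two (mul_nonneg (hp x) (hQ x y)) ?_
        rw [mul_left_comm]
        exact mul_le_mul_of_nonneg_left (hmarginal x y) (hp x)
    _ = ε / Real.log 2 := by
        simp_rw [← sum_mul, ← mul_sum, hQ1, mul_one, hp1, one_mul]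

/-- Mutual information bound for local differential privacy:
if `Y` is obtained from `X` by an ε-LDP channel `Q`, then `I(X;Y) ≤ ε·log₂ e = ε / ln 2`
(mutual information measured in bits). The prior on `X` is `p`, the channel is `Q`. -/
theorem stmt_2 {X Y : Type*} [Fintype X] [Fintype Y]
    (ε : ℝ) (hε : 0 < ε)
    (p : X → ℝ) (hp : ∀ x, 0 ≤ p x) (hp1 : ∑ x, p x = 1)
    (Q : X → Y → ℝ) (hQ : ∀ x y, 0 ≤ Q x y) (hQ1 : ∀ x, ∑ y, Q x y = 1)
    (hdp : ∀ (y : Y) (x x' : X), Q x y ≤ Real.exp ε * Q x' y) :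
    ∑ x, ∑ y, p x * Q x y *
        Real.logb 2 (p x * Q x y / (p x * ∑ x', p x' * Q x' y)) ≤
      ε / Real.log 2 :=
  stmt_2_general ε p hp hp1 Q hQ hQ1 hdp
end

section
/- Let Z be uniform on a finite hypothesis class ℋ of size M, let d be a distance function on ℋ, fix a tolerance d₀ ≥ 0, and let M_{d₀} = max_{h∈ℋ} |{h' ∈ ℋ : d(h,h') ≤ d₀}|. For any estimator Ẑ forming a Markov chain Z → X → Ẑ, the error probability P_e := P[d(Ẑ,Z) > d₀] satisfies P_e ≥ 1 − (I(Z;X) + 1)/(log₂ M − log₂ M_{d₀}). -/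
/-!
Let `p` be the joint law of `(Z, X)`, `q` the product of its marginals, and `k(z, x)` the
probability that the estimate lands within `d₀` of `z`. Coarse-graining `p` and `q` to the
two-point space {success, failure} can only shrink the divergence (log-sum inequality), so
`I(Z;X) = D(p‖q)` dominates the Bernoulli divergence between `1 - P_e` and the success
probability `β` under `q`. Under `q` the guess is independent of the uniform `Z`, so it lands in a
ball of at most `M_{d₀}` points with probability `β ≤ M_{d₀}/M`; bounding the binary entropy
by one bit then gives `I(Z;X) ≥ (1 - P_e) log₂ (M / M_{d₀}) - 1`.
-/

open Finset Real

namespace Real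

lemma mul_log_div_of_ne_zero {x y : ℝ} (hy : y ≠ 0) : x * log (x / y) = x * log x - x * log y := by
  rcases eq_or_ne x 0 with rfl | hx
  · simp
  · rw [log_div hx hy, mul_sub]

lemma sub_le_mul_log_div {u w : ℝ} (hu : 0 ≤ u) (hw : 0 ≤ w) (huw : w = 0 → u = 0) :
    u - w ≤ u * log (u / w) := by
  rcases hu.eq_or_lt with rfl | hu
  · simpa using hw
  have hw : 0 < w := hw.lt_of_ne fun h ↦ hu.ne' (huw h.symm)
  have h := one_sub_inv_le_log_of_pos (div_pos hu hw)
  rw [inv_div] at h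
  calc u - w = u * (1 - w / u) := by field_simp
    _ ≤ u * log (u / w) := mul_le_mul_of_nonneg_left h hu.le

theorem log_sum_inequality {ι : Type*} (s : Finset ι) {u v : ι → ℝ}
    (hu : ∀ i ∈ s, 0 ≤ u i) (hv : ∀ i ∈ s, 0 ≤ v i) (huv : ∀ i ∈ s, v i = 0 → u i = 0) :
    (∑ i ∈ s, u i) * log ((∑ i ∈ s, u i) / ∑ i ∈ s, v i) ≤ ∑ i ∈ s, u i * log (u i / v i) := by
  set U := ∑ i ∈ s, u i
  set V := ∑ i ∈ s, v i
  rcases (show 0 ≤ U from sum_nonneg hu).eq_or_lt with hU | hU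
  · have hu0 : ∀ i ∈ s, u i = 0 := (sum_eq_zero_iff_of_nonneg hu).1 hU.symm
    rw [← hU, zero_mul, sum_eq_zero fun i hi ↦ by rw [hu0 i hi, zero_mul]]
  have hV : 0 < V := (sum_nonneg hv).lt_of_ne' fun hV ↦ hU.ne' <|
    sum_eq_zero fun i hi ↦ huv i hi ((sum_eq_zero_iff_of_nonneg hv).1 hV i hi)
  have hc : 0 < U / V := div_pos hU hV
  -- compare each `u i` with its share `(U / V) * v i` of `U`
  have hterm : ∀ i ∈ s, u i - U / V * v i ≤ u i * log (u i / v i) - u i * log (U / V) := by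
    intro i hi
    have h := sub_le_mul_log_div (hu i hi) (mul_nonneg hc.le (hv i hi))
      fun h ↦ huv i hi ((mul_eq_zero.1 h).resolve_left hc.ne')
    rcases eq_or_ne (u i) 0 with h0 | h0
    · simpa [h0] using mul_nonneg hc.le (hv i hi)
    have hvi : v i ≠ 0 := fun h ↦ h0 (huv i hi h)
    rwa [mul_comm, ← div_div, log_div (div_ne_zero h0 hvi) hc.ne', mul_sub, mul_comm (v i)] at h
  have hsum : ∑ i ∈ s, (u i - U / V * v i) = 0 := by
    rw [sum_sub_distrib, ← mul_sum]; field_simp; ring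
  have := sum_le_sum hterm
  rw [hsum, sum_sub_distrib, ← sum_mul] at this
  linarith

lemma sum_mul_log_sum_div_le_of_weight {ι : Type*} (s : Finset ι) {p q k : ι → ℝ}
    (hp : ∀ i ∈ s, 0 ≤ p i) (hq : ∀ i ∈ s, 0 ≤ q i) (hpq : ∀ i ∈ s, q i = 0 → p i = 0)
    (hk : ∀ i ∈ s, 0 ≤ k i) :
    (∑ i ∈ s, p i * k i) * log ((∑ i ∈ s, p i * k i) / ∑ i ∈ s, q i * k i) ≤
      ∑ i ∈ s, k i * (p i * log (p i / q i)) := by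
  refine (log_sum_inequality s (fun i hi ↦ mul_nonneg (hp i hi) (hk i hi))
    (fun i hi ↦ mul_nonneg (hq i hi) (hk i hi)) fun i hi h ↦ ?_).trans_eq
    (sum_congr rfl fun i _ ↦ ?_)
  · rcases mul_eq_zero.1 h with h | h <;> simp [h, hpq i hi]
  · rcases eq_or_ne (k i) 0 with h | h
    · simp [h]
    · rw [mul_div_mul_right _ _ h]; ring

/-- Kullback–Leibler divergence between Bernoulli distributions with parameters `a` and `b`. -/
noncomputable def binKL (a b : ℝ) : ℝ := a * log (a / b) + (1 - a) * log ((1 - a) / (1 - b))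

theorem binKL_le_sum_mul_log_div {ι : Type*} (s : Finset ι) {p q k : ι → ℝ}
    (hp : ∀ i ∈ s, 0 ≤ p i) (hq : ∀ i ∈ s, 0 ≤ q i) (hpq : ∀ i ∈ s, q i = 0 → p i = 0)
    (hp1 : ∑ i ∈ s, p i = 1) (hq1 : ∑ i ∈ s, q i = 1)
    (hk0 : ∀ i ∈ s, 0 ≤ k i) (hk1 : ∀ i ∈ s, k i ≤ 1) :
    binKL (∑ i ∈ s, p i * k i) (∑ i ∈ s, q i * k i) ≤ ∑ i ∈ s, p i * log (p i / q i) := by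
  have hcompl : ∀ r : ι → ℝ, ∑ i ∈ s, r i = 1 →
      ∑ i ∈ s, r i * (1 - k i) = 1 - ∑ i ∈ s, r i * k i := fun r hr ↦ by
    simp only [mul_sub, mul_one, sum_sub_distrib, hr]
  have hyes := sum_mul_log_sum_div_le_of_weight s hp hq hpq hk0
  have hno := sum_mul_log_sum_div_le_of_weight s hp hq hpq fun i hi ↦ sub_nonneg.2 (hk1 i hi)
  rw [hcompl p hp1, hcompl q hq1] at hno
  calc _ ≤ ∑ i ∈ s, k i * (p i * log (p i / q i)) +
          ∑ i ∈ s, (1 - k i) * (p i * log (p i / q i)) := add_le_add hyes hno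
    _ = _ := by rw [← sum_add_distrib]; exact sum_congr rfl fun i _ ↦ by ring

theorem neg_mul_log_sub_log_two_le_binKL {a b : ℝ} (ha : a ≤ 1)
    (hb0 : 0 < b) (hb1 : b < 1) : -(a * log b) - log 2 ≤ binKL a b := by
  have hH := binEntropy_le_log_two (p := a)
  have hlog : (1 - a) * log (1 - b) ≤ 0 :=
    mul_nonpos_of_nonneg_of_nonpos (by linarith) (log_nonpos (by linarith) (by linarith))
  rw [binEntropy, log_inv, log_inv] at hH
  rw [binKL, mul_log_div_of_ne_zero hb0.ne', mul_log_div_of_ne_zero (by linarith)]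
  linarith

theorem mul_logb_inv_sub_one_le_sum_mul_logb_div {ι : Type*} (s : Finset ι) {p q k : ι → ℝ}
    {β : ℝ} (hp : ∀ i ∈ s, 0 ≤ p i) (hq : ∀ i ∈ s, 0 ≤ q i) (hpq : ∀ i ∈ s, q i = 0 → p i = 0)
    (hp1 : ∑ i ∈ s, p i = 1) (hq1 : ∑ i ∈ s, q i = 1)
    (hk0 : ∀ i ∈ s, 0 ≤ k i) (hk1 : ∀ i ∈ s, k i ≤ 1)
    (hB0 : 0 < ∑ i ∈ s, q i * k i) (hBβ : ∑ i ∈ s, q i * k i ≤ β) (hβ : β < 1) :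
    (∑ i ∈ s, p i * k i) * logb 2 β⁻¹ - 1 ≤ ∑ i ∈ s, p i * logb 2 (p i / q i) := by
  set a := ∑ i ∈ s, p i * k i
  set B := ∑ i ∈ s, q i * k i
  have ha0 : 0 ≤ a := sum_nonneg fun i hi ↦ mul_nonneg (hp i hi) (hk0 i hi)
  have ha1 : a ≤ 1 := hp1 ▸ sum_le_sum fun i hi ↦ mul_le_of_le_one_right (hp i hi) (hk1 i hi)
  have h := (neg_mul_log_sub_log_two_le_binKL ha1 hB0 (hBβ.trans_lt hβ)).trans
    (binKL_le_sum_mul_log_div s hp hq hpq hp1 hq1 hk0 hk1)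
  have hlogβ : a * log β⁻¹ ≤ -(a * log B) := by
    rw [log_inv, mul_neg, neg_le_neg_iff]
    exact mul_le_mul_of_nonneg_left (log_le_log hB0 hBβ) ha0
  have hlog2 : 0 < log 2 := log_pos one_lt_two
  calc a * logb 2 β⁻¹ - 1 = (a * log β⁻¹ - log 2) / log 2 := by rw [logb]; field_simp
    _ ≤ (∑ i ∈ s, p i * log (p i / q i)) / log 2 := by gcongr; linarith
    _ = _ := by simp only [logb, sum_div, mul_div_assoc]

end Real

namespace DistortionFano

variable {H X : Type*} [Fintype H]

noncomputable def outputDist (Q : H → X → ℝ) (x : X) : ℝ :=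
  ∑ h, ((Fintype.card H : ℝ))⁻¹ * Q h x

noncomputable def jointDist (Q : H → X → ℝ) (z : H × X) : ℝ :=
  ((Fintype.card H : ℝ))⁻¹ * Q z.1 z.2

noncomputable def productDist (Q : H → X → ℝ) (z : H × X) : ℝ :=
  ((Fintype.card H : ℝ))⁻¹ * outputDist Q z.2

noncomputable def successProb (R : X → H → ℝ) (d : H → H → ℝ) (d₀ : ℝ) (z : H × X) : ℝ :=
  ∑ h', R z.2 h' * if d₀ < d h' z.1 then 0 else 1

variable {Q : H → X → ℝ} {R : X → H → ℝ} {d : H → H → ℝ} {d₀ : ℝ}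

lemma jointDist_nonneg (hQ : ∀ h x, 0 ≤ Q h x) (z : H × X) : 0 ≤ jointDist Q z :=
  mul_nonneg (by positivity) (hQ z.1 z.2)

lemma outputDist_nonneg (hQ : ∀ h x, 0 ≤ Q h x) (x : X) : 0 ≤ outputDist Q x :=
  sum_nonneg fun h _ ↦ jointDist_nonneg hQ (h, x)

lemma productDist_nonneg (hQ : ∀ h x, 0 ≤ Q h x) (z : H × X) : 0 ≤ productDist Q z :=
  mul_nonneg (by positivity) (outputDist_nonneg hQ z.2)

lemma sum_jointDist [Fintype X] [Nonempty H] (hQ1 : ∀ h, ∑ x, Q h x = 1) :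
    ∑ z, jointDist Q z = 1 := by
  simp [jointDist, Fintype.sum_prod_type, ← mul_sum, hQ1]

lemma sum_outputDist [Fintype X] [Nonempty H] (hQ1 : ∀ h, ∑ x, Q h x = 1) :
    ∑ x, outputDist Q x = 1 := by
  rw [← sum_jointDist hQ1, Fintype.sum_prod_type, sum_comm]; rfl

lemma sum_productDist [Fintype X] [Nonempty H] (hQ1 : ∀ h, ∑ x, Q h x = 1) :
    ∑ z, productDist Q z = 1 := by
  simp [productDist, Fintype.sum_prod_type, ← mul_sum, sum_outputDist hQ1]

lemma jointDist_eq_zero_of_productDist_eq_zero [Nonempty H] (hQ : ∀ h x, 0 ≤ Q h x) {z : H × X}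
    (hz : productDist Q z = 0) : jointDist Q z = 0 := by
  have hout : outputDist Q z.2 = 0 := by simpa [productDist] using hz
  exact (sum_eq_zero_iff_of_nonneg fun h _ ↦ jointDist_nonneg hQ (h, z.2)).1 hout z.1 (mem_univ _)

lemma successProb_nonneg (hR : ∀ x h, 0 ≤ R x h) (z : H × X) : 0 ≤ successProb R d d₀ z :=
  sum_nonneg fun h' _ ↦ mul_nonneg (hR z.2 h') (by split_ifs <;> norm_num)

lemma one_sub_successProb (hR1 : ∀ x, ∑ h, R x h = 1) (z : H × X) :
    1 - successProb R d d₀ z = ∑ h', R z.2 h' * if d₀ < d h' z.1 then 1 else 0 := by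
  rw [successProb, sub_eq_iff_eq_add, ← sum_add_distrib]
  exact (hR1 z.2).symm.trans (sum_congr rfl fun h' _ ↦ by split_ifs <;> ring)

lemma successProb_le_one (hR : ∀ x h, 0 ≤ R x h) (hR1 : ∀ x, ∑ h, R x h = 1) (z : H × X) :
    successProb R d d₀ z ≤ 1 := by
  have herr := one_sub_successProb (d := d) (d₀ := d₀) hR1 z
  have herr_nonneg : 0 ≤ 1 - successProb R d d₀ z :=
    herr ▸ sum_nonneg fun h' _ ↦ mul_nonneg (hR z.2 h') (by split_ifs <;> norm_num)
  linarith

lemma sum_jointDist_mul_successProb [Fintype X] [Nonempty H] (hQ1 : ∀ h, ∑ x, Q h x = 1)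
    (hR1 : ∀ x, ∑ h, R x h = 1) :
    ∑ z, jointDist Q z * successProb R d d₀ z = 1 - ∑ h, ∑ x, ∑ h',
      ((Fintype.card H : ℝ))⁻¹ * Q h x * R x h' * (if d₀ < d h' h then 1 else 0) := by
  have herr : ∑ z, jointDist Q z * (1 - successProb R d d₀ z) = ∑ h, ∑ x, ∑ h',
      ((Fintype.card H : ℝ))⁻¹ * Q h x * R x h' * (if d₀ < d h' h then 1 else 0) := by
    simp only [one_sub_successProb hR1, Fintype.sum_prod_type, mul_sum, jointDist, mul_assoc]
  have htotal : ∑ z, (jointDist Q z * successProb R d d₀ z +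
      jointDist Q z * (1 - successProb R d d₀ z)) = 1 := by
    simpa only [← mul_add, add_sub_cancel, mul_one] using sum_jointDist hQ1
  rw [sum_add_distrib, herr] at htotal
  linarith

lemma sum_jointDist_mul_logb [Fintype X] [Nonempty H] :
    ∑ z, jointDist Q z * logb 2 (jointDist Q z / productDist Q z) =
      ∑ h, ∑ x, ((Fintype.card H : ℝ))⁻¹ * Q h x * logb 2 (Q h x / outputDist Q x) := by
  have hN : ((Fintype.card H : ℝ))⁻¹ ≠ 0 := by simp
  simp only [Fintype.sum_prod_type, jointDist, productDist, mul_div_mul_left _ _ hN]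

lemma sum_ite_lt_eq_ncard (h' : H) :
    ∑ h, (if d₀ < d h' h then 0 else 1 : ℝ) = ({h | d h' h ≤ d₀} : Set H).ncard := by
  rw [Set.ncard_eq_toFinset_card', Set.toFinset_ofPred, ← sum_boole]
  exact sum_congr rfl fun h _ ↦ by split_ifs <;> first | rfl | linarith

lemma sum_productDist_mul_successProb [Fintype X] :
    ∑ z, productDist Q z * successProb R d d₀ z = ∑ x, ∑ h', outputDist Q x * R x h' *
      (((Fintype.card H : ℝ))⁻¹ * ({h | d h' h ≤ d₀} : Set H).ncard) := by
  simp only [Fintype.sum_prod_type, productDist, successProb, ← sum_ite_lt_eq_ncard, mul_sum]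
  rw [sum_comm]
  refine sum_congr rfl fun x _ ↦ ?_
  rw [sum_comm]
  exact sum_congr rfl fun h' _ ↦ sum_congr rfl fun h _ ↦ by ring

lemma sum_outputDist_mul [Fintype X] [Nonempty H] (hQ1 : ∀ h, ∑ x, Q h x = 1)
    (hR1 : ∀ x, ∑ h, R x h = 1) : ∑ x, ∑ h', outputDist Q x * R x h' = 1 := by
  simp [← mul_sum, hR1, sum_outputDist hQ1]

lemma sum_productDist_mul_successProb_le [Fintype X] [Nonempty H] (hQ : ∀ h x, 0 ≤ Q h x)
    (hQ1 : ∀ h, ∑ x, Q h x = 1) (hR : ∀ x h, 0 ≤ R x h) (hR1 : ∀ x, ∑ h, R x h = 1) :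
    ∑ z, productDist Q z * successProb R d d₀ z ≤
      (univ.sup fun h ↦ ({h' | d h h' ≤ d₀} : Set H).ncard : ℕ) / Fintype.card H := by
  rw [sum_productDist_mul_successProb]
  calc _ ≤ ∑ x, ∑ h', outputDist Q x * R x h' *
        ((univ.sup fun h ↦ ({h' | d h h' ≤ d₀} : Set H).ncard : ℕ) / Fintype.card H : ℝ) := by
        gcongr with x _ h' _
        · exact mul_nonneg (outputDist_nonneg hQ x) (hR x h')
        rw [inv_mul_eq_div]
        gcongr
        exact le_sup (f := fun h ↦ ({h' | d h h' ≤ d₀} : Set H).ncard) (mem_univ h')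
    _ = _ := by simp only [← sum_mul, sum_outputDist_mul hQ1 hR1, one_mul]

lemma inv_card_le_sum_productDist_mul_successProb [Fintype X] [Nonempty H]
    (hd0 : ∀ h, d h h = 0) (hd₀ : 0 ≤ d₀) (hQ : ∀ h x, 0 ≤ Q h x)
    (hQ1 : ∀ h, ∑ x, Q h x = 1) (hR : ∀ x h, 0 ≤ R x h) (hR1 : ∀ x, ∑ h, R x h = 1) :
    ((Fintype.card H : ℝ))⁻¹ ≤ ∑ z, productDist Q z * successProb R d d₀ z := by
  rw [sum_productDist_mul_successProb]
  calc _ = ∑ x, ∑ h', outputDist Q x * R x h' * ((Fintype.card H : ℝ))⁻¹ := by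
        simp only [← sum_mul, sum_outputDist_mul hQ1 hR1, one_mul]
    _ ≤ _ := by
        gcongr with x _ h' _
        · exact mul_nonneg (outputDist_nonneg hQ x) (hR x h')
        refine le_mul_of_one_le_right (by positivity) ?_
        exact Nat.one_le_cast.2 ((Set.ncard_pos (Set.toFinite _)).2 ⟨h', by simp [hd0, hd₀]⟩)

end DistortionFano

open DistortionFano

theorem stmt_5_general {H X : Type*} [Fintype H] [Fintype X]
    (M : ℕ) (hM : M = Fintype.card H)
    (d : H → H → ℝ) (hd0 : ∀ h, d h h = 0)
    (d₀ : ℝ) (hd₀ : 0 ≤ d₀)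
    (Md : ℕ) (hMd : Md = Finset.univ.sup (fun h : H => ({h' | d h h' ≤ d₀} : Set H).ncard))
    (Q : H → X → ℝ) (hQ : ∀ h x, 0 ≤ Q h x) (hQ1 : ∀ h, ∑ x, Q h x = 1)
    (R : X → H → ℝ) (hR : ∀ x h, 0 ≤ R x h) (hR1 : ∀ x, ∑ h, R x h = 1)
    (hlog : Real.logb 2 Md < Real.logb 2 M)
    (Pe : ℝ) (hPe : Pe = ∑ h, ∑ x, ∑ h', ((M : ℝ))⁻¹ * Q h x * R x h' *
        (if d₀ < d h' h then 1 else 0))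
    (I : ℝ) (hI : I = ∑ h, ∑ x, ((M : ℝ))⁻¹ * Q h x *
        Real.logb 2 (Q h x / (∑ h'', ((M : ℝ))⁻¹ * Q h'' x))) :
    Pe ≥ 1 - (I + 1) / (Real.logb 2 M - Real.logb 2 Md) := by
  subst hM
  have : Nonempty H := by
    rw [← not_isEmpty_iff]
    intro hH
    simp [hMd, univ_eq_empty] at hlog
  have hN : (0 : ℝ) < Fintype.card H := by positivity
  have hB_pos := (inv_pos.2 hN).trans_le
    (inv_card_le_sum_productDist_mul_successProb hd0 hd₀ hQ hQ1 hR hR1)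
  have hB_le : _ ≤ (Md : ℝ) / Fintype.card H :=
    hMd ▸ sum_productDist_mul_successProb_le hQ hQ1 hR hR1
  have hMd_pos : (0 : ℝ) < Md := (div_pos_iff_of_pos_right hN).1 (hB_pos.trans_le hB_le)
  have hMd_lt : (Md : ℝ) < Fintype.card H := (logb_lt_logb_iff one_lt_two hMd_pos hN).1 hlog
  have hfano := mul_logb_inv_sub_one_le_sum_mul_logb_div univ
    (fun z _ ↦ jointDist_nonneg hQ z) (fun z _ ↦ productDist_nonneg hQ z)
    (fun z _ ↦ jointDist_eq_zero_of_productDist_eq_zero hQ) (sum_jointDist hQ1)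
    (sum_productDist hQ1) (fun z _ ↦ successProb_nonneg hR z)
    (fun z _ ↦ successProb_le_one hR hR1 z) hB_pos hB_le ((div_lt_one hN).2 hMd_lt)
  rw [sum_jointDist_mul_successProb hQ1 hR1, ← hPe, sum_jointDist_mul_logb, inv_div,
    logb_div hN.ne' hMd_pos.ne'] at hfano
  unfold outputDist at hfano
  rw [ge_iff_le, sub_le_comm, le_div_iff₀ (sub_pos.2 hlog), hI]
  linarith

/-- Generalized Fano inequality with distortion: `Z` is uniform on a finite class
of size `M`, `d` is a distance on it, `d₀ ≥ 0` a tolerance, and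
`Md = max_h |{h' : d h h' ≤ d₀}|`. For any estimator `Ẑ` (kernel `R`) based on data
`X` (kernel `Q`), the probability `P_e = P[d(Ẑ,Z) > d₀]` satisfies
`P_e ≥ 1 − (I(Z;X)+1)/(log₂ M − log₂ Md)`, assuming `log₂ M > log₂ Md`. -/
theorem stmt_5 {H X : Type*} [Fintype H] [Fintype X]
    (M : ℕ) (hM : M = Fintype.card H)
    (d : H → H → ℝ) (hd0 : ∀ h, d h h = 0) (hdsymm : ∀ h h', d h h' = d h' h)
    (d₀ : ℝ) (hd₀ : 0 ≤ d₀)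
    (Md : ℕ) (hMd : Md = Finset.univ.sup (fun h : H => ({h' | d h h' ≤ d₀} : Set H).ncard))
    (Q : H → X → ℝ) (hQ : ∀ h x, 0 ≤ Q h x) (hQ1 : ∀ h, ∑ x, Q h x = 1)
    (R : X → H → ℝ) (hR : ∀ x h, 0 ≤ R x h) (hR1 : ∀ x, ∑ h, R x h = 1)
    (hlog : Real.logb 2 Md < Real.logb 2 M)
    (Pe : ℝ) (hPe : Pe = ∑ h, ∑ x, ∑ h', ((M : ℝ))⁻¹ * Q h x * R x h' *
        (if d₀ < d h' h then 1 else 0))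
    (I : ℝ) (hI : I = ∑ h, ∑ x, ((M : ℝ))⁻¹ * Q h x *
        Real.logb 2 (Q h x / (∑ h'', ((M : ℝ))⁻¹ * Q h'' x))) :
    Pe ≥ 1 - (I + 1) / (Real.logb 2 M - Real.logb 2 Md) :=
  stmt_5_general M hM d hd0 d₀ hd₀ Md hMd Q hQ hQ1 R hR hR1 hlog Pe hPe I hI
end

section
/- Let 𝒟 be a finite set, and for each pair (i,z) ∈ 𝒟 with i a size-w subset of [N] and z ∈ {0,1}^w, let p_{i,z} ≥ 0 be a probability distribution (Σ p_{i,z} = 1) satisfying (1−ε')/D ≤ p_{i,z} ≤ (1+ε')/D, where D = |𝒟| is even and 0 ≤ ε' < 1. Then the extremal points of this convex polytope of distributions are exactly the distributions p^A indexed by subsets A ⊂ 𝒟 of cardinality D/2, defined by p^A_{i,z} = (1+ε')/D if (i,z) ∈ A and p^A_{i,z} = (1−ε')/D otherwise. -/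
/-!
The polytope is the slice of the box `[a, b]^𝒟`, with `a = (1 - ε')/D` and `b = (1 + ε')/D`, by
the hyperplane `∑ p = 1`. At an extreme point at most one coordinate lies strictly inside
`(a, b)`: otherwise moving mass between two interior coordinates gives a segment through the
point. If exactly one coordinate is interior, all others sit at `a` or `b`, so its offset from `a`
is an integer multiple of `b - a` (here `D` even is used), which is impossible strictly between
the endpoints. Hence extreme points are vertices of the box, and for `ε' > 0` the mass condition
says that exactly `D / 2` coordinates equal `b`. Conversely every vertex of the box lying in the
slice is extreme in it.
-/

/-- The data space `𝒟`: a size-`w` subset `i` of `[N]` together with a binary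
labeling of its elements (so `|𝒟| = C(N,w)·2^w`). -/
abbrev UserData (N w : ℕ) :=
  Σ i : {s : Finset (Fin N) // s.card = w}, ({x : Fin N // x ∈ i.1} → Bool)

open Finset Set

theorem eq_zero_of_mem_extremePoints_of_add_mem_of_sub_mem {𝕜 E : Type*} [Field 𝕜]
    [LinearOrder 𝕜] [IsStrictOrderedRing 𝕜] [AddCommGroup E] [Module 𝕜 E] {A : Set E}
    {x v : E} (hx : x ∈ A.extremePoints 𝕜) (hadd : x + v ∈ A) (hsub : x - v ∈ A) : v = 0 := by
  have hmid : x ∈ openSegment 𝕜 (x + v) (x - v) :=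
    ⟨1 / 2, 1 / 2, by norm_num, by norm_num, by norm_num, by module⟩
  simpa using hx.2 hadd hsub hmid

section Box

variable {ι : Type*} [Fintype ι] [DecidableEq ι] {a b : ℝ}

theorem sum_piecewise_const (A : Finset ι) (a b : ℝ) :
    ∑ n, A.piecewise (fun _ ↦ b) (fun _ ↦ a) n = a * Fintype.card ι + (b - a) * #A := by
  rw [sum_piecewise, Finset.univ_inter, sum_const, sum_const, ← Finset.compl_eq_univ_sdiff,
    card_compl, nsmul_eq_mul, nsmul_eq_mul, Nat.cast_sub (card_le_univ A)]
  ring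

theorem eq_piecewise_of_forall_eq_or_eq {p : ι → ℝ} (hp : ∀ n, p n = a ∨ p n = b) :
    p = ({n | p n = b} : Finset ι).piecewise (fun _ ↦ b) (fun _ ↦ a) := by
  funext n
  by_cases h : p n = b
  · simp [h]
  · rw [Finset.piecewise_eq_of_notMem _ _ _ (by simpa using h)]
    exact (hp n).resolve_right h

theorem sum_eq_of_forall_eq_or_eq {p : ι → ℝ} (hp : ∀ n, p n = a ∨ p n = b) :
    ∑ n, p n = a * Fintype.card ι + (b - a) * #{n | p n = b} :=
  calc ∑ n, p n = ∑ n, ({n | p n = b} : Finset ι).piecewise (fun _ ↦ b) (fun _ ↦ a) n :=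
        congrArg (fun q : ι → ℝ ↦ ∑ n, q n) (eq_piecewise_of_forall_eq_or_eq hp)
    _ = _ := sum_piecewise_const _ a b

theorem eq_of_mem_Ioo_of_mem_extremePoints {s : ℝ} {p : ι → ℝ}
    (hp : p ∈ (univ.pi (fun _ : ι ↦ Icc a b) ∩ {q | ∑ n, q n = s}).extremePoints ℝ)
    {m m' : ι} (hm : p m ∈ Ioo a b) (hm' : p m' ∈ Ioo a b) : m = m' := by
  by_contra hne
  obtain ⟨hbox, hsum⟩ := extremePoints_subset hp
  replace hsum : ∑ n, p n = s := hsum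
  set t := min (min (b - p m) (p m - a)) (min (b - p m') (p m' - a))
  have ht : 0 < t := by
    simp only [t, lt_min_iff, sub_pos]
    exact ⟨⟨hm.2, hm.1⟩, hm'.2, hm'.1⟩
  have htm : t ≤ b - p m ∧ t ≤ p m - a := by simp [t]
  have htm' : t ≤ b - p m' ∧ t ≤ p m' - a := by simp [t]
  set v : ι → ℝ := Pi.single m t - Pi.single m' t
  have hv_sum : ∑ n, v n = 0 := by simp [v]
  have hmem : ∀ c : ℝ, c = 1 ∨ c = -1 →
      p + c • v ∈ univ.pi (fun _ : ι ↦ Icc a b) ∩ {q | ∑ n, q n = s} := by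
    rintro c hc
    refine ⟨fun n _ ↦ ?_, ?_⟩
    · rcases eq_or_ne n m with rfl | hnm
      · rcases hc with rfl | rfl <;> simp [v, Ne.symm hne] <;> constructor <;> linarith
      rcases eq_or_ne n m' with rfl | hnm'
      · rcases hc with rfl | rfl <;> simp [v, hne] <;> constructor <;> linarith
      simpa [v, hnm, hnm'] using hbox n (mem_univ n)
    · show ∑ n, (p + c • v) n = s
      simp [sum_add_distrib, ← mul_sum, hv_sum, hsum]
  have hv : v = 0 := eq_zero_of_mem_extremePoints_of_add_mem_of_sub_mem hp
    (by simpa using hmem 1 (by simp)) (by simpa [sub_eq_add_neg] using hmem (-1) (by simp))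
  have hvm := congrFun hv m
  simp [v, hne] at hvm
  linarith

theorem forall_eq_or_eq_of_sum_eq {p : ι → ℝ} {r : ℕ}
    (hbox : ∀ n, p n ∈ Icc a b) (hsum : ∑ n, p n = a * Fintype.card ι + (b - a) * r)
    (hint : ∀ m m', p m ∈ Ioo a b → p m' ∈ Ioo a b → m = m') :
    ∀ n, p n = a ∨ p n = b := by
  by_contra! ⟨m, hma, hmb⟩
  have hm : p m ∈ Ioo a b := ⟨(hbox m).1.lt_of_ne' hma, (hbox m).2.lt_of_ne hmb⟩
  set q := Function.update p m a
  have hq : ∀ n, q n = a ∨ q n = b := by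
    intro n
    rcases eq_or_ne n m with rfl | hn
    · simp [q]
    · simp only [q, Function.update_of_ne hn]
      by_contra! h
      exact hn (hint n m ⟨(hbox n).1.lt_of_ne' h.1, (hbox n).2.lt_of_ne h.2⟩ hm)
  have hsumq : ∑ n, q n + (p m - a) = ∑ n, p n := by
    rw [sum_update_of_mem (mem_univ m), sum_eq_add_sum_sdiff_singleton_of_mem (mem_univ m) p]
    ring
  rw [sum_eq_of_forall_eq_or_eq hq, hsum] at hsumq
  set k := #{n | q n = b}
  have hgap : p m - a = (b - a) * ((r : ℤ) - k : ℤ) := by push_cast; linarith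
  have hba : 0 < b - a := by linarith [hm.1, hm.2]
  have hlow : (0 : ℝ) < ((r : ℤ) - k : ℤ) := by
    by_contra! h
    nlinarith [hm.1]
  have hhigh : (((r : ℤ) - k : ℤ) : ℝ) < 1 := by
    by_contra! h
    nlinarith [hm.2]
  have h0 : (0 : ℤ) < (r : ℤ) - k := by exact_mod_cast hlow
  have h1 : (r : ℤ) - k < 1 := by exact_mod_cast hhigh
  omega

theorem extremePoints_pi_Icc_inter_sum_eq (hab : a ≤ b) {r : ℕ} (hr : r ≤ Fintype.card ι) :
    (univ.pi (fun _ : ι ↦ Icc a b) ∩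
        {p | ∑ n, p n = a * Fintype.card ι + (b - a) * r}).extremePoints ℝ =
      {p | ∃ A : Finset ι, #A = r ∧ p = A.piecewise (fun _ ↦ b) (fun _ ↦ a)} := by
  ext p
  constructor
  · intro hp
    obtain ⟨hbox, hsum⟩ := extremePoints_subset hp
    have hends := forall_eq_or_eq_of_sum_eq (fun n ↦ hbox n (mem_univ n)) hsum
      fun m m' ↦ eq_of_mem_Ioo_of_mem_extremePoints hp
    rcases hab.lt_or_eq with hlt | rfl
    · refine ⟨_, ?_, eq_piecewise_of_forall_eq_or_eq hends⟩
      have hsum : _ = _ := (sum_eq_of_forall_eq_or_eq hends).symm.trans hsum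
      exact_mod_cast mul_left_cancel₀ (sub_pos.2 hlt).ne' (add_left_cancel hsum)
    · obtain ⟨A, -, hA⟩ := Finset.exists_subset_card_eq (s := univ) (by simpa using hr)
      exact ⟨A, hA, funext fun n ↦ by simp [Finset.piecewise, (hends n).elim id id]⟩
  · rintro ⟨A, rfl, rfl⟩
    have hvertex : A.piecewise (fun _ ↦ b) (fun _ ↦ a) ∈
        (univ.pi fun _ : ι ↦ Icc a b).extremePoints ℝ := by
      rw [extremePoints_pi, extremePoints_Icc hab]
      intro n _
      by_cases hn : n ∈ A <;> simp [hn]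
    exact inter_extremePoints_subset_extremePoints_of_subset Set.inter_subset_left
      ⟨⟨extremePoints_subset hvertex, sum_piecewise_const A a b⟩, hvertex⟩

end Box

theorem nonempty_userData {N w : ℕ} (hwN : w ≤ N) : Nonempty (UserData N w) := by
  obtain ⟨s, -, hs⟩ :=
    Finset.exists_subset_card_eq (s := (univ : Finset (Fin N))) (by simpa using hwN)
  exact ⟨⟨⟨s, hs⟩, fun _ ↦ false⟩⟩

theorem stmt_11_general (N w : ℕ) (hwN : w ≤ N)
    (ε' : ℝ) (hε0 : 0 ≤ ε') (hε1 : ε' < 1)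
    (D : ℕ) (hD : D = Fintype.card (UserData N w)) (hDeven : Even D) :
    Set.extremePoints ℝ
        {p : UserData N w → ℝ |
          (∀ n, 0 ≤ p n) ∧ (∑ n, p n = 1) ∧
          ∀ n, (1 - ε') / D ≤ p n ∧ p n ≤ (1 + ε') / D} =
      {p : UserData N w → ℝ |
        ∃ A : Finset (UserData N w), 2 * A.card = D ∧
          ∀ n, p n = if n ∈ A then (1 + ε') / D else (1 - ε') / D} := by
  have := nonempty_userData hwN
  obtain ⟨r, hr⟩ := hDeven.two_dvd
  have hDpos : (0 : ℝ) < D := by rw [hD]; exact_mod_cast Fintype.card_pos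
  set a := (1 - ε') / D
  set b := (1 + ε') / D
  have ha : 0 ≤ a := div_nonneg (by linarith) hDpos.le
  have hmass : a * Fintype.card (UserData N w) + (b - a) * r = 1 := by
    rw [← hD]
    simp only [a, b]
    field_simp
    rw [hr]
    push_cast
    ring
  convert extremePoints_pi_Icc_inter_sum_eq (a := a) (b := b)
    (div_le_div_of_nonneg_right (by linarith) hDpos.le)
    (show r ≤ Fintype.card (UserData N w) by omega) using 2
  · ext p
    simp only [hmass, Set.mem_ofPred_eq, Set.mem_inter_iff, Set.mem_pi, Set.mem_univ,
      true_imp_iff, Set.mem_Icc]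
    exact ⟨fun ⟨_, hsum, hbox⟩ ↦ ⟨hbox, hsum⟩,
      fun ⟨hbox, hsum⟩ ↦ ⟨fun n ↦ ha.trans (hbox n).1, hsum, hbox⟩⟩
  · ext p
    simp only [funext_iff, Finset.piecewise]
    exact exists_congr fun A ↦ and_congr_left' (by omega)

/-- The extremal points of the polytope of probability distributions `p` on `𝒟`
with `(1−ε')/D ≤ p_n ≤ (1+ε')/D` (where `D = |𝒟|` is even, `0 ≤ ε' < 1`) are
exactly the distributions taking value `(1+ε')/D` on a subset `A` of cardinality
`D/2` and `(1−ε')/D` elsewhere. -/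
theorem stmt_11 (N w : ℕ) (hw : 1 ≤ w) (hwN : w ≤ N)
    (ε' : ℝ) (hε0 : 0 ≤ ε') (hε1 : ε' < 1)
    (D : ℕ) (hD : D = Fintype.card (UserData N w)) (hDeven : Even D) :
    Set.extremePoints ℝ
        {p : UserData N w → ℝ |
          (∀ n, 0 ≤ p n) ∧ (∑ n, p n = 1) ∧
          ∀ n, (1 - ε') / D ≤ p n ∧ p n ≤ (1 + ε') / D} =
      {p : UserData N w → ℝ |
        ∃ A : Finset (UserData N w), 2 * A.card = D ∧
          ∀ n, p n = if n ∈ A then (1 + ε') / D else (1 - ε') / D} :=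
  stmt_11_general N w hwN ε' hε0 hε1 D hD hDeven
end
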